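/- arXiv:2003.03341 — 3 statements merged into one kernel-verified Lean document; each statement's English description precedes it below -/
import Mathlib

section
/- Let Θ be a measurable space, K ≥ 1, let μ_pr^K be the K-fold product of a probability measure μ_pr on Θ, let π : Θ^K → [0,∞) be measurable with ∫ π dμ_pr^K = 1, and let μ be the probability measure on Θ^K with density π with respect to μ_pr^K. Let S_K be a subgroup of the symmetric group on {1,…,K}, and define r^{UW}(θ,σ) := π(θ_σ)/Σ_{σ'∈S_K} π(θ_{σ'}) when the denominator is positive and r^{UW}(θ,σ) := 1/|S_K| otherwise. Then the unweighted swapping kernel q^{UW}(θ, B) := Σ_{σ∈S_K} r^{UW}(θ,σ) δ_{θ_σ}(B) is a Markov kernel on Θ^K that is reversible with respect to μ: for all measurable sets A, B ⊆ Θ^K, ∫_A q^{UW}(θ, B) μ(dθ) = ∫_B q^{UW}(θ, A) μ(dθ). -/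
/-!
Write `m(θ) = ∑_{σ ∈ S_K} π(θ_σ)`. Since `S_K` is a group, `m` is `S_K`-invariant, and
`r(θ, σ) π(θ) = π(θ) π(θ_σ) / m(θ)` (both sides vanish when `m(θ) = 0`, as then `π(θ) = 0`).
Hence the mass that `μ` sends from `A` to `B` through the swap `σ` is
`∫ 1_A(θ) 1_B(θ_σ) π(θ) π(θ_σ) / m(θ) dμ_pr^K(θ)`, and the substitution `θ ↦ θ_σ`, which
preserves the product measure `μ_pr^K`, turns it into the mass sent from `B` to `A` through
`σ⁻¹`. Summing over `σ ∈ S_K` gives reversibility.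
-/

open MeasureTheory ProbabilityTheory ENNReal Equiv

theorem measurePreserving_comp_perm {ι α : Type*} [Fintype ι] [MeasurableSpace α]
    (μ : Measure α) [SigmaFinite μ] (σ : Perm ι) :
    MeasurePreserving (fun θ : ι → α => θ ∘ σ) (Measure.pi fun _ => μ) (Measure.pi fun _ => μ) :=
  measurePreserving_arrowCongr' _ _ σ.symm (MeasurableEquiv.refl α) fun _ => .id μ

namespace SwapKernel

variable {ι α : Type*} (S : Finset (Perm ι)) (π : (ι → α) → ℝ≥0∞)

noncomputable def mass (θ : ι → α) : ℝ≥0∞ :=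
  ∑ σ ∈ S, π (θ ∘ σ)

noncomputable def weight (θ : ι → α) (σ : Perm ι) : ℝ≥0∞ :=
  if 0 < mass S π θ then π (θ ∘ σ) / mass S π θ else (S.card : ℝ≥0∞)⁻¹

variable {S π}

theorem le_mass (h1 : 1 ∈ S) (θ : ι → α) : π θ ≤ mass S π θ :=
  Finset.single_le_sum (f := fun σ : Perm ι => π (θ ∘ σ)) (fun _ _ => zero_le) h1

theorem mass_ne_top (hπ : ∀ θ, π θ ≠ ∞) (θ : ι → α) : mass S π θ ≠ ∞ :=
  ENNReal.sum_ne_top.2 fun _ _ => hπ _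

theorem mass_comp_perm (hmul : ∀ σ ∈ S, ∀ ρ ∈ S, σ * ρ ∈ S) (hinv : ∀ σ ∈ S, σ⁻¹ ∈ S)
    {σ : Perm ι} (hσ : σ ∈ S) (θ : ι → α) : mass S π (θ ∘ σ) = mass S π θ :=
  Finset.sum_nbij' (σ * ·) (σ⁻¹ * ·) (fun _ hρ => hmul _ hσ _ hρ)
    (fun _ hρ => hmul _ (hinv _ hσ) _ hρ) (fun _ _ => inv_mul_cancel_left σ _)
    (fun _ _ => mul_inv_cancel_left σ _) (fun _ _ => rfl)

theorem weight_mul_self (h1 : 1 ∈ S) (θ : ι → α) (σ : Perm ι) :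
    weight S π θ σ * π θ = π θ * π (θ ∘ σ) / mass S π θ := by
  unfold weight
  split_ifs with hpos
  · rw [div_eq_mul_inv, div_eq_mul_inv]
    ring
  · have hθ : π θ = 0 := le_antisymm ((le_mass h1 θ).trans (not_lt.1 hpos)) zero_le
    simp [hθ]

theorem sum_weight (h1 : 1 ∈ S) (hπ : ∀ θ, π θ ≠ ∞) (θ : ι → α) :
    ∑ σ ∈ S, weight S π θ σ = 1 := by
  unfold weight
  split_ifs with hpos
  · simp_rw [div_eq_mul_inv]
    rw [← Finset.sum_mul]
    exact ENNReal.mul_inv_cancel hpos.ne' (mass_ne_top hπ θ)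
  · rw [Finset.sum_const, nsmul_eq_mul]
    exact ENNReal.mul_inv_cancel (by simpa using Finset.card_ne_zero_of_mem h1) (natCast_ne_top _)

variable [MeasurableSpace α]

variable (S π) in
noncomputable def swapMeasure (θ : ι → α) : Measure (ι → α) :=
  ∑ σ ∈ S, weight S π θ σ • Measure.dirac (θ ∘ σ)

theorem measurable_mass (hπ : Measurable π) : Measurable (mass S π) :=
  Finset.measurable_sum _ fun _ _ => hπ.comp (by fun_prop)

theorem measurable_weight (hπ : Measurable π) (σ : Perm ι) :
    Measurable fun θ => weight S π θ σ :=
  Measurable.ite (measurableSet_lt measurable_const (measurable_mass hπ))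
    ((hπ.comp (by fun_prop)).div (measurable_mass hπ)) measurable_const

theorem swapMeasure_apply {B : Set (ι → α)} (hB : MeasurableSet B) (θ : ι → α) :
    swapMeasure S π θ B = ∑ σ ∈ S, weight S π θ σ * B.indicator 1 (θ ∘ σ) := by
  simp only [swapMeasure, Measure.finsetSum_apply, Measure.smul_apply,
    Measure.dirac_apply' _ hB, smul_eq_mul]

variable (S)

noncomputable def kernel (hπ : Measurable π) : Kernel (ι → α) (ι → α) where
  toFun := swapMeasure S π
  measurable' := Measure.measurable_of_measurable_coe _ fun B hB => by
    simp_rw [swapMeasure_apply hB]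
    exact Finset.measurable_sum _ fun σ _ =>
      (measurable_weight hπ σ).mul ((measurable_one.indicator hB).comp (by fun_prop))

variable {S}

theorem kernel_apply (hπ : Measurable π) (θ : ι → α) : kernel S hπ θ = swapMeasure S π θ := rfl

theorem isMarkovKernel (hπ : Measurable π) (h1 : 1 ∈ S) (hπ_ne_top : ∀ θ, π θ ≠ ∞) :
    IsMarkovKernel (kernel S hπ) where
  isProbabilityMeasure θ := ⟨by
    simp [kernel_apply, swapMeasure_apply MeasurableSet.univ, sum_weight h1 hπ_ne_top]⟩

variable (S π) in
/-- The mass that `ν.withDensity π` sends from `A` to `B` through the swap `σ`. -/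
noncomputable def flow (ν : Measure (ι → α)) (σ : Perm ι) (A B : Set (ι → α)) : ℝ≥0∞ :=
  ∫⁻ θ, A.indicator 1 θ * B.indicator 1 (θ ∘ σ) * (π θ * π (θ ∘ σ) / mass S π θ) ∂ν

theorem measurable_flow_integrand (hπ : Measurable π) (σ : Perm ι) {A B : Set (ι → α)}
    (hA : MeasurableSet A) (hB : MeasurableSet B) :
    Measurable fun θ => A.indicator 1 θ * B.indicator 1 (θ ∘ σ) *
      (π θ * π (θ ∘ σ) / mass S π θ) :=
  ((measurable_one.indicator hA).mul ((measurable_one.indicator hB).comp (by fun_prop))).mul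
    ((hπ.mul (hπ.comp (by fun_prop))).div (measurable_mass hπ))

theorem setLIntegral_kernel_withDensity (hπ : Measurable π) (h1 : 1 ∈ S)
    (ν : Measure (ι → α)) {A B : Set (ι → α)} (hA : MeasurableSet A) (hB : MeasurableSet B) :
    ∫⁻ θ in A, kernel S hπ θ B ∂ν.withDensity π = ∑ σ ∈ S, flow S π ν σ A B := by
  rw [setLIntegral_withDensity_eq_setLIntegral_mul _ hπ (Kernel.measurable_coe _ hB) hA,
    ← lintegral_indicator hA]
  unfold flow
  rw [← lintegral_finsetSum _ fun σ _ => measurable_flow_integrand hπ σ hA hB]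
  refine lintegral_congr fun θ => ?_
  by_cases hθ : θ ∈ A
  · simp only [Set.indicator_of_mem hθ, Pi.one_apply, one_mul, Pi.mul_apply, kernel_apply,
      swapMeasure_apply hB, Finset.mul_sum]
    refine Finset.sum_congr rfl fun σ _ => ?_
    rw [← weight_mul_self h1]
    ring
  · simp [Set.indicator_of_notMem hθ]

theorem flow_eq_flow_inv (hπ : Measurable π) (hmul : ∀ σ ∈ S, ∀ ρ ∈ S, σ * ρ ∈ S)
    (hinv : ∀ σ ∈ S, σ⁻¹ ∈ S) {ν : Measure (ι → α)} {σ : Perm ι} (hσ : σ ∈ S)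
    (hνσ : MeasurePreserving (fun θ : ι → α => θ ∘ σ) ν ν)
    {A B : Set (ι → α)} (hA : MeasurableSet A) (hB : MeasurableSet B) :
    flow S π ν σ A B = flow S π ν σ⁻¹ B A := by
  rw [flow, flow, ← hνσ.lintegral_comp (measurable_flow_integrand hπ σ⁻¹ hB hA)]
  refine lintegral_congr fun θ => ?_
  have hθ : θ ∘ σ ∘ ⇑σ⁻¹ = θ := by ext; simp
  simp only [Function.comp_assoc, hθ, mass_comp_perm hmul hinv hσ]
  rw [mul_comm (A.indicator 1 θ), mul_comm (π θ)]

theorem isReversible (hπ : Measurable π) (h1 : 1 ∈ S) (hmul : ∀ σ ∈ S, ∀ ρ ∈ S, σ * ρ ∈ S)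
    (hinv : ∀ σ ∈ S, σ⁻¹ ∈ S) {ν : Measure (ι → α)}
    (hν : ∀ σ ∈ S, MeasurePreserving (fun θ : ι → α => θ ∘ σ) ν ν) :
    (kernel S hπ).IsReversible (ν.withDensity π) := by
  intro A B hA hB
  rw [setLIntegral_kernel_withDensity hπ h1 ν hA hB, setLIntegral_kernel_withDensity hπ h1 ν hB hA,
    Finset.sum_congr rfl fun σ hσ => flow_eq_flow_inv hπ hmul hinv hσ (hν σ hσ) hA hB]
  exact Finset.sum_nbij' (·⁻¹) (·⁻¹) hinv hinv
    (fun σ _ => inv_inv σ) (fun σ _ => inv_inv σ) (fun _ _ => rfl)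

end SwapKernel

theorem unweighted_swapping_kernel_reversible_general
    {Θ : Type*} [MeasurableSpace Θ] (K : ℕ)
    (μpr : Measure Θ) [IsProbabilityMeasure μpr]
    (μprK : Measure (Fin K → Θ)) (hμprK : μprK = Measure.pi fun _ => μpr)
    (π : (Fin K → Θ) → ℝ≥0∞) (hπm : Measurable π) (hπfin : ∀ θ, π θ ≠ ∞)
    (μ : Measure (Fin K → Θ)) (hμ : μ = μprK.withDensity π)
    (SK : Finset (Equiv.Perm (Fin K)))
    (hSKid : 1 ∈ SK)
    (hSKinv : ∀ σ ∈ SK, σ⁻¹ ∈ SK)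
    (hSKmul : ∀ σ ∈ SK, ∀ ρ ∈ SK, σ * ρ ∈ SK)
    (r : (Fin K → Θ) → Equiv.Perm (Fin K) → ℝ≥0∞)
    (hr : ∀ θ σ, r θ σ =
      if 0 < ∑ σ' ∈ SK, π (fun i => θ (σ' i)) then
        π (fun i => θ (σ i)) / ∑ σ' ∈ SK, π (fun i => θ (σ' i))
      else (SK.card : ℝ≥0∞)⁻¹)
    (q : (Fin K → Θ) → Measure (Fin K → Θ))
    (hq : ∀ θ, q θ = ∑ σ ∈ SK, r θ σ • Measure.dirac (fun i => θ (σ i))) :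
    (∀ θ, IsProbabilityMeasure (q θ)) ∧
    (∀ B : Set (Fin K → Θ), MeasurableSet B → Measurable fun θ => q θ B) ∧
    (∀ A B : Set (Fin K → Θ), MeasurableSet A → MeasurableSet B →
      ∫⁻ θ in A, q θ B ∂μ = ∫⁻ θ in B, q θ A ∂μ) := by
  have hr_eq : r = SwapKernel.weight SK π := funext₂ hr
  have hq_eq : q = SwapKernel.kernel SK hπm := by
    funext θ
    rw [hq, hr_eq]
    rfl
  subst hq_eq hμ hμprK
  have := SwapKernel.isMarkovKernel hπm hSKid hπfin
  exact ⟨IsMarkovKernel.isProbabilityMeasure, fun _ hB => Kernel.measurable_coe _ hB,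
    SwapKernel.isReversible hπm hSKid hSKmul hSKinv fun σ _ => measurePreserving_comp_perm μpr σ⟩

/-- the unweighted swapping kernel
`q^{UW}(θ,B) = ∑_{σ∈S_K} r^{UW}(θ,σ) δ_{θ_σ}(B)`, with
`r^{UW}(θ,σ) = π(θ_σ)/∑_{σ'∈S_K} π(θ_{σ'})` (and `1/|S_K|` if the denominator
vanishes), is a Markov kernel on `Θ^K` reversible with respect to the measure `μ`
with density `π` w.r.t. the `K`-fold product prior. -/
theorem unweighted_swapping_kernel_reversible
    {Θ : Type*} [MeasurableSpace Θ] (K : ℕ) (hK : 1 ≤ K)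
    (μpr : Measure Θ) [IsProbabilityMeasure μpr]
    (μprK : Measure (Fin K → Θ)) (hμprK : μprK = Measure.pi fun _ => μpr)
    (π : (Fin K → Θ) → ℝ≥0∞) (hπm : Measurable π) (hπfin : ∀ θ, π θ ≠ ∞)
    (hπint : ∫⁻ θ, π θ ∂μprK = 1)
    (μ : Measure (Fin K → Θ)) (hμ : μ = μprK.withDensity π)
    (SK : Finset (Equiv.Perm (Fin K)))
    (hSKid : 1 ∈ SK)
    (hSKinv : ∀ σ ∈ SK, σ⁻¹ ∈ SK)
    (hSKmul : ∀ σ ∈ SK, ∀ ρ ∈ SK, σ * ρ ∈ SK)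
    (r : (Fin K → Θ) → Equiv.Perm (Fin K) → ℝ≥0∞)
    (hr : ∀ θ σ, r θ σ =
      if 0 < ∑ σ' ∈ SK, π (fun i => θ (σ' i)) then
        π (fun i => θ (σ i)) / ∑ σ' ∈ SK, π (fun i => θ (σ' i))
      else (SK.card : ℝ≥0∞)⁻¹)
    (q : (Fin K → Θ) → Measure (Fin K → Θ))
    (hq : ∀ θ, q θ = ∑ σ ∈ SK, r θ σ • Measure.dirac (fun i => θ (σ i))) :
    (∀ θ, IsProbabilityMeasure (q θ)) ∧
    (∀ B : Set (Fin K → Θ), MeasurableSet B → Measurable fun θ => q θ B) ∧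
    (∀ A B : Set (Fin K → Θ), MeasurableSet A → MeasurableSet B →
      ∫⁻ θ in A, q θ B ∂μ = ∫⁻ θ in B, q θ A ∂μ) :=
  unweighted_swapping_kernel_reversible_general K μpr μprK hμprK π hπm hπfin μ hμ SK hSKid hSKinv
    hSKmul r hr q hq
end

section
/- Let Θ be a measurable space, K ≥ 1, let μ_pr be a probability measure on Θ and μ_pr^K its K-fold product on Θ^K. Let π_1,…,π_K : Θ → [0,∞) be measurable with ∫ π_k dμ_pr = 1, let μ_k be the probability measure with density π_k with respect to μ_pr, and let μ := μ_1 × ⋯ × μ_K, which has density π(θ) := ∏_{k=1}^K π_k(θ_k) with respect to μ_pr^K. Let S_K be a subgroup of the symmetric group on {1,…,K}, let q^{UW} be the unweighted swapping kernel q^{UW}(θ, B) := Σ_{σ∈S_K} r^{UW}(θ,σ) δ_{θ_σ}(B) with r^{UW}(θ,σ) := π(θ_σ)/Σ_{σ'∈S_K} π(θ_{σ'}) when the denominator is positive and 1/|S_K| otherwise, and for k = 1,…,K let p_k be a Markov kernel on Θ reversible with respect to μ_k, with product kernel p(θ, ·) := p_1(θ_1, ·) × ⋯ × p_K(θ_K,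 ·). Then the Unweighted Generalized Parallel Tempering kernel p^{UW} := q^{UW} ∘ p ∘ q^{UW} (first apply q^{UW}, then p, then q^{UW}) is reversible with respect to μ. -/
open MeasureTheory ProbabilityTheory ENNReal Set

/-!
Both `q^{UW}` and the product kernel `p` are reversible with respect to `μ`, and a palindromic
composition `q ∘ p ∘ q` of `μ`-reversible kernels is `μ`-reversible: in the functional form
`∫ f · (κ g) dμ = ∫ g · (κ f) dμ` of reversibility one moves `q`, then `p`, then `q` across.

`p` is reversible because its joint law with `μ` is, after regrouping coordinates, the product of
the joint laws `μ_k ⊗ p_k`, each invariant under exchanging its two coordinates. For `q`, `μ` has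
density `π` with respect to the permutation-invariant prior `μ_pr^K`, and the mass
`π(θ) r(θ, σ) = π(θ) π(θ_σ) / Σ_{σ'} π(θ_{σ'})` sent from `θ` to `θ_σ` becomes, after the
substitution `θ ↦ θ_{σ⁻¹}` (which leaves the denominator unchanged since `S_K` is a group), the mass
sent back along `σ⁻¹`.
-/

lemma MeasureTheory.lintegral_indicator_one_mul {α : Type*} [MeasurableSpace α]
    {μ : Measure α} {s : Set α} (hs : MeasurableSet s) (f : α → ℝ≥0∞) :
    ∫⁻ x, s.indicator 1 x * f x ∂μ = ∫⁻ x in s, f x ∂μ := by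
  rw [← lintegral_indicator hs]
  refine lintegral_congr fun x => ?_
  by_cases hx : x ∈ s <;> simp [hx]

section Pi

variable {ι α β : Type*} [Fintype ι] [MeasurableSpace α] [MeasurableSpace β]

lemma lintegral_pi_prod (μ : ι → Measure α) [∀ i, IsProbabilityMeasure (μ i)]
    {f : ι → α → ℝ≥0∞} (hf : ∀ i, Measurable (f i)) :
    ∫⁻ x, ∏ i, f i (x i) ∂Measure.pi μ = ∏ i, ∫⁻ y, f i y ∂μ i := by
  rw [lintegral_prod_eq_prod_lintegral_of_indepFun _ _
    (iIndepFun_pi fun i => (hf i).aemeasurable) fun i => (hf i).comp (measurable_pi_apply i)]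
  exact Finset.prod_congr rfl fun i _ => (measurePreserving_eval μ i).lintegral_comp (hf i)

lemma setLIntegral_univ_pi_prod (μ : ι → Measure α) [∀ i, IsProbabilityMeasure (μ i)]
    {s : ι → Set α} (hs : ∀ i, MeasurableSet (s i)) {f : ι → α → ℝ≥0∞}
    (hf : ∀ i, Measurable (f i)) :
    ∫⁻ x in univ.pi s, ∏ i, f i (x i) ∂Measure.pi μ = ∏ i, ∫⁻ y in s i, f i y ∂μ i := by
  classical
  have hind : ∀ x, (univ.pi s).indicator (fun x => ∏ i, f i (x i)) x
      = ∏ i, (s i).indicator (f i) (x i) := fun x => by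
    simp [indicator_apply, Finset.prod_ite_zero]
  simp_rw [← lintegral_indicator (MeasurableSet.univ_pi hs), hind,
    ← lintegral_indicator (hs _)]
  exact lintegral_pi_prod μ fun i => (hf i).indicator (hs i)

theorem MeasureTheory.Measure.pi_withDensity (μ : ι → Measure α) [∀ i, IsProbabilityMeasure (μ i)]
    {f : ι → α → ℝ≥0∞} (hf : ∀ i, Measurable (f i))
    [∀ i, SigmaFinite ((μ i).withDensity (f i))] :
    Measure.pi (fun i => (μ i).withDensity (f i))
      = (Measure.pi μ).withDensity fun x => ∏ i, f i (x i) := by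
  refine Measure.pi_eq fun s hs => ?_
  rw [withDensity_apply _ (MeasurableSet.univ_pi hs), setLIntegral_univ_pi_prod μ hs hf]
  exact Finset.prod_congr rfl fun i _ => (withDensity_apply _ (hs i)).symm

theorem measurePreserving_pi_comp_perm (μ : Measure α) [SigmaFinite μ] (σ : Equiv.Perm ι) :
    MeasurePreserving (fun (x : ι → α) i => x (σ i)) (Measure.pi fun _ => μ)
      (Measure.pi fun _ => μ) := by
  convert measurePreserving_piCongrLeft (fun _ : ι => μ) σ.symm using 1
  ext x i
  simp [MeasurableEquiv.coe_piCongrLeft, Equiv.piCongrLeft_apply]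

end Pi

namespace ProbabilityTheory.Kernel

section Reversible

variable {α : Type*} [MeasurableSpace α] {μ : Measure α} {κ η : Kernel α α}

lemma isReversible_iff_map_swap_compProd [IsFiniteMeasure μ] [IsFiniteKernel κ] :
    IsReversible κ μ ↔ (μ ⊗ₘ κ).map Prod.swap = μ ⊗ₘ κ := by
  constructor
  · intro h
    refine ext_of_generate_finite _ generateFrom_prod.symm isPiSystem_prod ?_
      (by rw [Measure.map_apply measurable_swap .univ, preimage_univ])
    rintro _ ⟨s, hs, t, ht, rfl⟩
    rw [Measure.map_apply measurable_swap (hs.prod ht), preimage_swap_prod,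
      Measure.compProd_apply_prod ht hs, Measure.compProd_apply_prod hs ht, h ht hs]
  · intro h A B hA hB
    rw [← Measure.compProd_apply_prod hA hB, ← Measure.compProd_apply_prod hB hA,
      ← preimage_swap_prod A B, ← Measure.map_apply measurable_swap (hA.prod hB), h]

lemma IsReversible.lintegral_mul_lintegral [IsFiniteMeasure μ] [IsFiniteKernel κ]
    (h : IsReversible κ μ) {f g : α → ℝ≥0∞} (hf : Measurable f) (hg : Measurable g) :
    ∫⁻ x, f x * ∫⁻ y, g y ∂κ x ∂μ = ∫⁻ x, g x * ∫⁻ y, f y ∂κ x ∂μ := by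
  have joint : ∀ {f g : α → ℝ≥0∞}, Measurable f → Measurable g →
      ∫⁻ x, f x * ∫⁻ y, g y ∂κ x ∂μ = ∫⁻ z, f z.1 * g z.2 ∂(μ ⊗ₘ κ) := fun hf hg => by
    rw [Measure.lintegral_compProd (by fun_prop)]
    simp_rw [lintegral_const_mul _ hg]
  rw [joint hf hg, joint hg hf]
  conv_lhs => rw [← isReversible_iff_map_swap_compProd.1 h]
  rw [MeasureTheory.lintegral_map (by fun_prop) measurable_swap]
  simp_rw [Prod.fst_swap, Prod.snd_swap, mul_comm]

lemma IsReversible.of_lintegral_mul_lintegral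
    (h : ∀ f g : α → ℝ≥0∞, Measurable f → Measurable g →
      ∫⁻ x, f x * ∫⁻ y, g y ∂κ x ∂μ = ∫⁻ x, g x * ∫⁻ y, f y ∂κ x ∂μ) :
    IsReversible κ μ := by
  intro A B hA hB
  have := h (A.indicator 1) (B.indicator 1) (measurable_one.indicator hA)
    (measurable_one.indicator hB)
  simpa only [lintegral_indicator_one hA, lintegral_indicator_one hB,
    lintegral_indicator_one_mul hA, lintegral_indicator_one_mul hB] using this

lemma IsReversible.setLIntegral_lintegral [IsFiniteMeasure μ] [IsFiniteKernel κ]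
    (h : IsReversible κ μ) {A : Set α} (hA : MeasurableSet A) {g : α → ℝ≥0∞}
    (hg : Measurable g) :
    ∫⁻ x in A, ∫⁻ y, g y ∂κ x ∂μ = ∫⁻ x, g x * κ x A ∂μ := by
  have := h.lintegral_mul_lintegral (measurable_one.indicator hA) hg
  simpa only [lintegral_indicator_one hA, lintegral_indicator_one_mul hA] using this

theorem IsReversible.comp_comp [IsFiniteMeasure μ] [IsFiniteKernel κ] [IsFiniteKernel η]
    (hκ : IsReversible κ μ) (hη : IsReversible η μ) :
    IsReversible ((κ ∘ₖ η) ∘ₖ κ) μ := by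
  have key : ∀ {A B : Set α}, MeasurableSet A → MeasurableSet B →
      ∫⁻ x in A, ((κ ∘ₖ η) ∘ₖ κ) x B ∂μ = ∫⁻ x, κ x A * ∫⁻ y, κ y B ∂η x ∂μ := by
    intro A B hA hB
    rw [setLIntegral_congr_fun hA fun x _ => comp_apply' _ _ x hB,
      hκ.setLIntegral_lintegral hA ((κ ∘ₖ η).measurable_coe hB)]
    simp_rw [comp_apply' _ _ _ hB, mul_comm]
  intro A B hA hB
  rw [key hA hB, key hB hA,
    hη.lintegral_mul_lintegral (κ.measurable_coe hA) (κ.measurable_coe hB)]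

end Reversible

section Pi

variable {ι α β : Type*} [Fintype ι] [MeasurableSpace α] [MeasurableSpace β]

noncomputable def pi (κ : ι → Kernel α β) [∀ i, IsMarkovKernel (κ i)] :
    Kernel (ι → α) (ι → β) where
  toFun x := Measure.pi fun i => κ i (x i)
  measurable' := by
    refine .measure_of_isPiSystem_of_isProbabilityMeasure generateFrom_pi.symm isPiSystem_pi ?_
    rintro _ ⟨s, hs, rfl⟩
    simp_rw [Measure.pi_pi]
    exact Finset.measurable_prod _ fun i _ => (κ i).measurable_coe (hs i (mem_univ i)) |>.comp
      (measurable_pi_apply i)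

variable {κ : ι → Kernel α β} [∀ i, IsMarkovKernel (κ i)]

@[simp]
lemma pi_apply (x : ι → α) : pi κ x = Measure.pi fun i => κ i (x i) := rfl

instance : IsMarkovKernel (pi κ) := ⟨fun x => by rw [pi_apply]; infer_instance⟩

theorem compProd_pi (μ : ι → Measure α) [∀ i, IsProbabilityMeasure (μ i)] :
    Measure.pi μ ⊗ₘ pi κ = (Measure.pi fun i => μ i ⊗ₘ κ i).map
      (MeasurableEquiv.arrowProdEquivProdArrow α β ι) := by
  refine ext_of_generate_finite _
    (generateFrom_eq_prod generateFrom_pi generateFrom_pi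
      (.pi fun _ => isCountablySpanning_measurableSet)
      (.pi fun _ => isCountablySpanning_measurableSet)).symm
    (isPiSystem_pi.prod isPiSystem_pi) ?_ (by simp [MeasurableEquiv.map_apply])
  rintro _ ⟨_, ⟨s, hs, rfl⟩, _, ⟨t, ht, rfl⟩, rfl⟩
  simp only [mem_pi, mem_univ, true_implies, mem_ofPred_eq] at hs ht
  have hpre : MeasurableEquiv.arrowProdEquivProdArrow α β ι ⁻¹' (univ.pi s ×ˢ univ.pi t)
      = univ.pi fun i => s i ×ˢ t i := by
    ext; simp [MeasurableEquiv.arrowProdEquivProdArrow, Equiv.arrowProdEquivProdArrow, mem_pi,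
      forall_and]
  rw [Measure.compProd_apply_prod (.univ_pi hs) (.univ_pi ht), MeasurableEquiv.map_apply, hpre,
    Measure.pi_pi]
  simp_rw [pi_apply, Measure.pi_pi, Measure.compProd_apply_prod (hs _) (ht _)]
  exact setLIntegral_univ_pi_prod μ hs fun i => (κ i).measurable_coe (ht i)

theorem IsReversible.pi {κ : ι → Kernel α α} [∀ i, IsMarkovKernel (κ i)]
    {μ : ι → Measure α} [∀ i, IsProbabilityMeasure (μ i)]
    (h : ∀ i, IsReversible (κ i) (μ i)) : IsReversible (pi κ) (Measure.pi μ) := by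
  have hswap : (MeasurableEquiv.arrowProdEquivProdArrow α α ι) ∘ (fun z i => (z i).swap)
      = Prod.swap ∘ MeasurableEquiv.arrowProdEquivProdArrow α α ι := rfl
  rw [isReversible_iff_map_swap_compProd, compProd_pi,
    Measure.map_map measurable_swap (MeasurableEquiv.measurable _), ← hswap,
    ← Measure.map_map (MeasurableEquiv.measurable _) (by fun_prop),
    Measure.pi_map_pi fun _ => measurable_swap.aemeasurable]
  simp_rw [isReversible_iff_map_swap_compProd.1 (h _)]

end Pi

end ProbabilityTheory.Kernel

namespace ProbabilityTheory

open Equiv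

variable {ι α : Type*} (S : Finset (Perm ι)) (π : (ι → α) → ℝ≥0∞)

noncomputable def orbitSum (θ : ι → α) : ℝ≥0∞ := ∑ σ ∈ S, π fun i => θ (σ i)

noncomputable def swapRate (θ : ι → α) (σ : Perm ι) : ℝ≥0∞ :=
  if 0 < orbitSum S π θ then π (fun i => θ (σ i)) / orbitSum S π θ else (S.card : ℝ≥0∞)⁻¹

variable {S π}

lemma le_orbitSum_of_mem {σ : Perm ι} (hσ : σ ∈ S) (θ : ι → α) :
    π (fun i => θ (σ i)) ≤ orbitSum S π θ :=
  Finset.single_le_sum (f := fun σ : Perm ι => π fun i => θ (σ i)) (fun _ _ => zero_le) hσ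

lemma orbitSum_comp_perm (hinv : ∀ σ ∈ S, σ⁻¹ ∈ S) (hmul : ∀ σ ∈ S, ∀ ρ ∈ S, σ * ρ ∈ S)
    {τ : Perm ι} (hτ : τ ∈ S) (θ : ι → α) :
    orbitSum S π (fun i => θ (τ i)) = orbitSum S π θ :=
  Finset.sum_nbij' (τ * ·) (τ⁻¹ * ·) (fun _ hσ => hmul _ hτ _ hσ)
    (fun _ hρ => hmul _ (hinv _ hτ) _ hρ) (fun _ _ => by group) (fun _ _ => by group)
    fun _ _ => rfl

lemma swapRate_le_one {σ : Perm ι} (hσ : σ ∈ S) (θ : ι → α) : swapRate S π θ σ ≤ 1 := by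
  unfold swapRate
  split_ifs
  · exact ENNReal.div_le_of_le_mul (by simpa using le_orbitSum_of_mem hσ θ)
  · exact ENNReal.inv_le_one.2 (Nat.one_le_cast.2 (Finset.card_pos.2 ⟨σ, hσ⟩))

/-- Where the orbit sum vanishes, so does `π θ`; hence the junk value of `swapRate` there
never matters. -/
lemma mul_swapRate (h1 : 1 ∈ S) (θ : ι → α) (σ : Perm ι) :
    π θ * swapRate S π θ σ = π θ * π (fun i => θ (σ i)) / orbitSum S π θ := by
  unfold swapRate
  split_ifs with h
  · rw [mul_div_assoc]
  · have : π θ = 0 := le_antisymm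
      ((le_orbitSum_of_mem h1 θ).trans (not_lt.1 h)) zero_le
    simp [this]

variable [MeasurableSpace α]

lemma measurable_comp_perm (σ : Perm ι) : Measurable fun (θ : ι → α) i => θ (σ i) := by
  fun_prop

lemma measurable_orbitSum (hπ : Measurable π) : Measurable (orbitSum S π) :=
  Finset.measurable_sum _ fun σ _ => hπ.comp (measurable_comp_perm σ)

lemma measurable_swapRate (hπ : Measurable π) (σ : Perm ι) :
    Measurable fun θ => swapRate S π θ σ :=
  .ite (measurableSet_lt measurable_const (measurable_orbitSum hπ))
    ((hπ.comp (measurable_comp_perm σ)).div (measurable_orbitSum hπ)) measurable_const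

noncomputable def swapKernel (S : Finset (Perm ι)) {π : (ι → α) → ℝ≥0∞} (hπ : Measurable π) :
    Kernel (ι → α) (ι → α) where
  toFun θ := ∑ σ ∈ S, swapRate S π θ σ • Measure.dirac fun i => θ (σ i)
  measurable' := by
    refine Measure.measurable_of_measurable_coe _ fun s hs => ?_
    simp only [Measure.coe_finsetSum, Finset.sum_apply, Measure.smul_apply,
      Measure.dirac_apply' _ hs, smul_eq_mul]
    exact Finset.measurable_sum _ fun σ _ =>
      (measurable_swapRate hπ σ).mul ((measurable_one.indicator hs).comp (measurable_comp_perm σ))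

lemma swapKernel_apply (hπ : Measurable π) (θ : ι → α) :
    swapKernel S hπ θ = ∑ σ ∈ S, swapRate S π θ σ • Measure.dirac fun i => θ (σ i) := rfl

lemma lintegral_swapKernel (hπ : Measurable π) {g : (ι → α) → ℝ≥0∞} (hg : Measurable g)
    (θ : ι → α) :
    ∫⁻ y, g y ∂swapKernel S hπ θ = ∑ σ ∈ S, swapRate S π θ σ * g fun i => θ (σ i) := by
  simp_rw [swapKernel_apply, lintegral_finsetSum_measure, lintegral_smul_measure,
    lintegral_dirac' _ hg, smul_eq_mul]

instance (hπ : Measurable π) : IsFiniteKernel (swapKernel S hπ) := by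
  refine ⟨⟨S.card, natCast_lt_top _, fun θ => ?_⟩⟩
  rw [← lintegral_one, lintegral_swapKernel hπ measurable_const]
  simpa using Finset.sum_le_card_nsmul S _ 1 fun σ hσ => swapRate_le_one hσ θ

variable {ν : Measure (ι → α)}

lemma lintegral_mul_lintegral_swapKernel (hπ : Measurable π) (h1 : 1 ∈ S) {f g : (ι → α) → ℝ≥0∞}
    (hf : Measurable f) (hg : Measurable g) :
    ∫⁻ θ, f θ * ∫⁻ y, g y ∂swapKernel S hπ θ ∂ν.withDensity π
      = ∑ σ ∈ S, ∫⁻ θ, f θ * g (fun i => θ (σ i)) *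
          (π θ * π (fun i => θ (σ i)) / orbitSum S π θ) ∂ν := by
  have hf' : Measurable fun θ => f θ * ∫⁻ y, g y ∂swapKernel S hπ θ :=
    hf.mul hg.lintegral_kernel
  have hO := measurable_orbitSum (S := S) hπ
  rw [lintegral_withDensity_eq_lintegral_mul _ hπ hf',
    ← lintegral_finsetSum _ fun σ _ => by fun_prop]
  refine lintegral_congr fun θ => ?_
  simp only [Pi.mul_apply, lintegral_swapKernel hπ hg, Finset.mul_sum]
  refine Finset.sum_congr rfl fun σ _ => ?_
  rw [← mul_swapRate h1]
  ring

/-- Substitute `θ ↦ θ ∘ σ⁻¹`; the orbit sum does not change. -/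
lemma lintegral_mul_comp_perm_eq_inv (hπ : Measurable π) (hinv : ∀ σ ∈ S, σ⁻¹ ∈ S)
    (hmul : ∀ σ ∈ S, ∀ ρ ∈ S, σ * ρ ∈ S) {σ : Perm ι} (hσ : σ ∈ S)
    (hν : MeasurePreserving (fun (θ : ι → α) i => θ (σ⁻¹ i)) ν ν) {f g : (ι → α) → ℝ≥0∞}
    (hf : Measurable f) (hg : Measurable g) :
    ∫⁻ θ, f θ * g (fun i => θ (σ i)) * (π θ * π (fun i => θ (σ i)) / orbitSum S π θ) ∂ν
      = ∫⁻ θ, g θ * f (fun i => θ (σ⁻¹ i)) *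
          (π θ * π (fun i => θ (σ⁻¹ i)) / orbitSum S π θ) ∂ν := by
  have hO := measurable_orbitSum (S := S) hπ
  have hσ' := measurable_comp_perm (α := α) σ
  rw [← hν.lintegral_comp (by fun_prop)]
  simp only [orbitSum_comp_perm hinv hmul (hinv σ hσ)]
  simp only [Perm.coe_inv, symm_apply_apply]
  refine lintegral_congr fun θ => ?_
  ring_nf

theorem isReversible_swapKernel (hπ : Measurable π) (h1 : 1 ∈ S)
    (hinv : ∀ σ ∈ S, σ⁻¹ ∈ S) (hmul : ∀ σ ∈ S, ∀ ρ ∈ S, σ * ρ ∈ S)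
    (hν : ∀ σ ∈ S, MeasurePreserving (fun (θ : ι → α) i => θ (σ i)) ν ν) :
    Kernel.IsReversible (swapKernel S hπ) (ν.withDensity π) := by
  refine .of_lintegral_mul_lintegral fun f g hf hg => ?_
  rw [lintegral_mul_lintegral_swapKernel hπ h1 hf hg,
    lintegral_mul_lintegral_swapKernel hπ h1 hg hf,
    Finset.sum_congr rfl fun σ hσ =>
      lintegral_mul_comp_perm_eq_inv hπ hinv hmul hσ (hν _ (hinv σ hσ)) hf hg]
  exact Finset.sum_nbij' (·⁻¹) (·⁻¹) hinv hinv (fun _ _ => inv_inv _) (fun _ _ => inv_inv _)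
    fun _ _ => rfl

end ProbabilityTheory

theorem ugpt_kernel_reversible_general
    {Θ : Type*} [MeasurableSpace Θ] (K : ℕ)
    (μpr : Measure Θ) [IsProbabilityMeasure μpr]
    (μprK : Measure (Fin K → Θ)) (hμprK : μprK = Measure.pi fun _ => μpr)
    (πk : Fin K → Θ → ℝ≥0∞) (hπkm : ∀ k, Measurable (πk k))
    (μk : Fin K → Measure Θ) [∀ k, IsProbabilityMeasure (μk k)]
    (hμk : ∀ k, μk k = μpr.withDensity (πk k))
    (μ : Measure (Fin K → Θ)) (hμ : μ = Measure.pi μk)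
    (π : (Fin K → Θ) → ℝ≥0∞) (hπ : ∀ θ, π θ = ∏ k, πk k (θ k))
    (SK : Finset (Equiv.Perm (Fin K)))
    (hSKid : 1 ∈ SK)
    (hSKinv : ∀ σ ∈ SK, σ⁻¹ ∈ SK)
    (hSKmul : ∀ σ ∈ SK, ∀ ρ ∈ SK, σ * ρ ∈ SK)
    (r : (Fin K → Θ) → Equiv.Perm (Fin K) → ℝ≥0∞)
    (hr : ∀ θ σ, r θ σ =
      if 0 < ∑ σ' ∈ SK, π (fun i => θ (σ' i)) then
        π (fun i => θ (σ i)) / ∑ σ' ∈ SK, π (fun i => θ (σ' i))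
      else (SK.card : ℝ≥0∞)⁻¹)
    (q : (Fin K → Θ) → Measure (Fin K → Θ))
    (hq : ∀ θ, q θ = ∑ σ ∈ SK, r θ σ • Measure.dirac (fun i => θ (σ i)))
    (pk : Fin K → Kernel Θ Θ) [∀ k, IsMarkovKernel (pk k)]
    (hrev : ∀ k, ∀ A B : Set Θ, MeasurableSet A → MeasurableSet B →
      ∫⁻ x in A, pk k x B ∂(μk k) = ∫⁻ x in B, pk k x A ∂(μk k))
    (p : (Fin K → Θ) → Measure (Fin K → Θ))
    (hp : ∀ θ, p θ = Measure.pi fun k => pk k (θ k))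
    (pUW : (Fin K → Θ) → Set (Fin K → Θ) → ℝ≥0∞)
    (hpUW : ∀ θ A, pUW θ A = ∫⁻ z, ∫⁻ z', q z' A ∂(p z) ∂(q θ)) :
    ∀ A B : Set (Fin K → Θ), MeasurableSet A → MeasurableSet B →
      ∫⁻ θ in A, pUW θ B ∂μ = ∫⁻ θ in B, pUW θ A ∂μ := by
  have hπm : Measurable π := by
    rw [show π = fun θ => ∏ k, πk k (θ k) from funext hπ]
    fun_prop
  have : ∀ k, SigmaFinite (μpr.withDensity (πk k)) := fun k => hμk k ▸ inferInstance
  have hμπ : μ = μprK.withDensity π := by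
    rw [hμ, funext hμk, Measure.pi_withDensity _ hπkm, hμprK, ← funext hπ]
  have : IsProbabilityMeasure μ := hμ ▸ inferInstance
  set κq := swapKernel SK hπm
  have hqκ : ∀ θ, q θ = κq θ := fun θ => by
    rw [hq, swapKernel_apply, funext₂ hr]
    rfl
  have hrevq : Kernel.IsReversible κq μ := hμπ ▸
    isReversible_swapKernel hπm hSKid hSKinv hSKmul fun σ _ =>
      hμprK ▸ measurePreserving_pi_comp_perm μpr σ
  have hrevp : Kernel.IsReversible (Kernel.pi pk) μ :=
    hμ ▸ Kernel.IsReversible.pi fun k _ _ hA hB => hrev k _ _ hA hB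
  have hpUWκ : ∀ θ A, MeasurableSet A → pUW θ A = ((κq ∘ₖ Kernel.pi pk) ∘ₖ κq) θ A := by
    intro θ A hA
    simp_rw [hpUW, Kernel.comp_apply' _ _ _ hA, hqκ, hp, Kernel.pi_apply]
  intro A B hA hB
  simp_rw [hpUWκ _ _ hA, hpUWκ _ _ hB]
  exact hrevq.comp_comp hrevp hA hB

/-- the Unweighted Generalized Parallel Tempering kernel
`p^{UW} = q^{UW} ∘ p ∘ q^{UW}` (first apply `q^{UW}`, then the product kernel `p`,
then `q^{UW}` again) is reversible with respect to the product posterior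
`μ = μ_1 × ⋯ × μ_K`. -/
theorem ugpt_kernel_reversible
    {Θ : Type*} [MeasurableSpace Θ] (K : ℕ) (hK : 1 ≤ K)
    (μpr : Measure Θ) [IsProbabilityMeasure μpr]
    (μprK : Measure (Fin K → Θ)) (hμprK : μprK = Measure.pi fun _ => μpr)
    (πk : Fin K → Θ → ℝ≥0∞) (hπkm : ∀ k, Measurable (πk k))
    (hπkfin : ∀ k x, πk k x ≠ ∞) (hπkint : ∀ k, ∫⁻ x, πk k x ∂μpr = 1)
    (μk : Fin K → Measure Θ) [∀ k, IsProbabilityMeasure (μk k)]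
    (hμk : ∀ k, μk k = μpr.withDensity (πk k))
    (μ : Measure (Fin K → Θ)) (hμ : μ = Measure.pi μk)
    (π : (Fin K → Θ) → ℝ≥0∞) (hπ : ∀ θ, π θ = ∏ k, πk k (θ k))
    (SK : Finset (Equiv.Perm (Fin K)))
    (hSKid : 1 ∈ SK)
    (hSKinv : ∀ σ ∈ SK, σ⁻¹ ∈ SK)
    (hSKmul : ∀ σ ∈ SK, ∀ ρ ∈ SK, σ * ρ ∈ SK)
    (r : (Fin K → Θ) → Equiv.Perm (Fin K) → ℝ≥0∞)
    (hr : ∀ θ σ, r θ σ =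
      if 0 < ∑ σ' ∈ SK, π (fun i => θ (σ' i)) then
        π (fun i => θ (σ i)) / ∑ σ' ∈ SK, π (fun i => θ (σ' i))
      else (SK.card : ℝ≥0∞)⁻¹)
    (q : (Fin K → Θ) → Measure (Fin K → Θ))
    (hq : ∀ θ, q θ = ∑ σ ∈ SK, r θ σ • Measure.dirac (fun i => θ (σ i)))
    (pk : Fin K → Kernel Θ Θ) [∀ k, IsMarkovKernel (pk k)]
    (hrev : ∀ k, ∀ A B : Set Θ, MeasurableSet A → MeasurableSet B →
      ∫⁻ x in A, pk k x B ∂(μk k) = ∫⁻ x in B, pk k x A ∂(μk k))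
    (p : (Fin K → Θ) → Measure (Fin K → Θ))
    (hp : ∀ θ, p θ = Measure.pi fun k => pk k (θ k))
    (pUW : (Fin K → Θ) → Set (Fin K → Θ) → ℝ≥0∞)
    (hpUW : ∀ θ A, pUW θ A = ∫⁻ z, ∫⁻ z', q z' A ∂(p z) ∂(q θ)) :
    ∀ A B : Set (Fin K → Θ), MeasurableSet A → MeasurableSet B →
      ∫⁻ θ in A, pUW θ B ∂μ = ∫⁻ θ in B, pUW θ A ∂μ :=
  ugpt_kernel_reversible_general K μpr μprK hμprK πk hπkm μk hμk μ hμ π hπ SK hSKid hSKinv hSKmul r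
    hr q hq pk hrev p hp pUW hpUW
end

section
/- Let ν be a σ-finite measure on a measurable space W, and let π_1, π_2 : W → [0,∞) be probability densities with respect to ν (∫ π_i dν = 1) with positive overlap Λ := ∫ min(π_1, π_2) dν > 0; let μ_1, μ_2 be the corresponding probability measures. Then for every measurable f : W → ℝ that is square-integrable with respect to both μ_1 and μ_2, ∬ (f(x) − f(y))² μ_1(dx) μ_2(dy) ≤ ((2 − Λ)/Λ) (Var_{μ_1}(f) + Var_{μ_2}(f)). -/
/-!
Write `E_i`, `V_i` for the mean and variance of `f` under `μ_i`. The double integral equals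
`V_1 + V_2 + (E_1 - E_2)²`, so it suffices to bound `Λ (E_1 - E_2)² ≤ 2 (1 - Λ) (V_1 + V_2)`.
Both `μ_i` dominate the overlap measure `ρ = min(π_1, π_2) ν` of mass `Λ`; let `c` be the mean of
`f` under `ρ / Λ`. Since `f - c` integrates to zero against `ρ`, `E_i - c` is its integral against
the remainder `μ_i - ρ` of mass `1 - Λ`, and Cauchy–Schwarz there gives `Λ (E_i - c)² ≤ (1 - Λ) V_i`.
-/

open MeasureTheory ENNReal ProbabilityTheory

section

variable {α β : Type*} {mα : MeasurableSpace α} {mβ : MeasurableSpace β}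
  {μ : Measure α} {ν : Measure β}

lemma integral_sub_const_sq [IsFiniteMeasure μ] {f : α → ℝ} (hf : MemLp f 2 μ) (c : ℝ) :
    ∫ x, (f x - c) ^ 2 ∂μ = ∫ x, f x ^ 2 ∂μ - 2 * c * ∫ x, f x ∂μ + μ.real Set.univ * c ^ 2 := by
  have hf2 : Integrable (fun x => f x ^ 2) μ := hf.integrable_sq
  have hf1 : Integrable (fun x => 2 * c * f x) μ := (hf.integrable one_le_two).const_mul _
  have hpoly : Integrable (fun x => f x ^ 2 - 2 * c * f x) μ := hf2.sub hf1
  calc ∫ x, (f x - c) ^ 2 ∂μ = ∫ x, (f x ^ 2 - 2 * c * f x + c ^ 2) ∂μ := by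
        congr 1; ext x; ring
    _ = _ := by
        rw [integral_add hpoly (integrable_const _), integral_sub hf2 hf1,
          integral_const_mul, integral_const, smul_eq_mul]

lemma sq_integral_le_measureReal_univ_mul [IsFiniteMeasure μ] {g : α → ℝ} (hg : MemLp g 2 μ) :
    (∫ x, g x ∂μ) ^ 2 ≤ μ.real Set.univ * ∫ x, g x ^ 2 ∂μ := by
  have hquad : ∀ t : ℝ, 0 ≤ μ.real Set.univ * (t * t) + (-2 * ∫ x, g x ∂μ) * t +
      ∫ x, g x ^ 2 ∂μ := fun t => by
    have := integral_sub_const_sq hg t ▸ integral_nonneg fun x => sq_nonneg (g x - t)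
    linarith
  have := discrim_le_zero hquad
  rw [discrim] at this
  linarith

lemma integral_sub_const_sq_eq_variance_add [IsProbabilityMeasure μ] {f : α → ℝ}
    (hf : MemLp f 2 μ) (c : ℝ) :
    ∫ x, (f x - c) ^ 2 ∂μ = Var[f; μ] + (∫ x, f x ∂μ - c) ^ 2 := by
  rw [integral_sub_const_sq hf, variance_eq_sub hf, probReal_univ]
  simp only [Pi.pow_apply]
  ring

lemma integral_integral_sub_sq [IsProbabilityMeasure μ] [IsProbabilityMeasure ν]
    {f : α → ℝ} {g : β → ℝ} (hf : MemLp f 2 μ) (hg : MemLp g 2 ν) :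
    ∫ x, ∫ y, (f x - g y) ^ 2 ∂ν ∂μ =
      Var[f; μ] + Var[g; ν] + (∫ x, f x ∂μ - ∫ y, g y ∂ν) ^ 2 := by
  have hinner : ∀ x, ∫ y, (f x - g y) ^ 2 ∂ν = Var[g; ν] + (f x - ∫ y, g y ∂ν) ^ 2 := fun x => by
    simp_rw [sub_sq_comm (f x), integral_sub_const_sq_eq_variance_add hg]
  have hf' : MemLp (fun x => f x - ∫ y, g y ∂ν) 2 μ := hf.sub (memLp_const _)
  simp_rw [hinner]
  rw [integral_add (integrable_const _) hf'.integrable_sq, integral_const,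
    probReal_univ, one_smul, integral_sub_const_sq_eq_variance_add hf]
  ring

lemma measureReal_univ_mul_sq_integral_sub_average_le [IsProbabilityMeasure μ] {ρ : Measure α}
    (hρ : ρ ≤ μ) {f : α → ℝ} (hf : MemLp f 2 μ) :
    ρ.real Set.univ * (∫ x, f x ∂μ - ⨍ x, f x ∂ρ) ^ 2 ≤ (1 - ρ.real Set.univ) * Var[f; μ] := by
  have : IsFiniteMeasure ρ := isFiniteMeasure_of_le μ hρ
  set c := ⨍ x, f x ∂ρ
  have hmass : (μ - ρ).real Set.univ = 1 - ρ.real Set.univ := by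
    rw [measureReal_def, Measure.sub_apply .univ hρ, ENNReal.toReal_sub_of_le (hρ _)
      (measure_ne_top _ _), ← measureReal_def, ← measureReal_def, probReal_univ]
  have hg : MemLp (fun x => f x - c) 2 μ := hf.sub (memLp_const c)
  have hgδ : MemLp (fun x => f x - c) 2 (μ - ρ) := hg.mono_measure Measure.sub_le
  have hmean : ∫ x, f x ∂μ - c = ∫ x, (f x - c) ∂(μ - ρ) :=
    calc ∫ x, f x ∂μ - c = ∫ x, (f x - c) ∂(μ - ρ + ρ) := by
          rw [Measure.sub_add_cancel_of_le hρ, integral_sub (hf.integrable one_le_two)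
            (integrable_const c), integral_const, probReal_univ, one_smul]
      _ = ∫ x, (f x - c) ∂(μ - ρ) := by
          rw [integral_add_measure (hgδ.integrable one_le_two)
            ((hg.mono_measure hρ).integrable one_le_two), integral_sub_average, add_zero]
  have hcs : (∫ x, f x ∂μ - c) ^ 2 ≤ (1 - ρ.real Set.univ) * ∫ x, (f x - c) ^ 2 ∂(μ - ρ) := by
    rw [hmean, ← hmass]
    exact sq_integral_le_measureReal_univ_mul hgδ
  have hmono : ∫ x, (f x - c) ^ 2 ∂(μ - ρ) ≤ Var[f; μ] + (∫ x, f x ∂μ - c) ^ 2 := by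
    rw [← integral_sub_const_sq_eq_variance_add hf]
    exact integral_mono_measure Measure.sub_le (.of_forall fun x => sq_nonneg _) hg.integrable_sq
  have hmass_nonneg : 0 ≤ 1 - ρ.real Set.univ := hmass ▸ measureReal_nonneg
  have := hcs.trans (mul_le_mul_of_nonneg_left hmono hmass_nonneg)
  linarith

end

theorem overlap_variance_bound_general
    {W : Type*} [MeasurableSpace W]
    (ν : Measure W)
    (π1 π2 : W → ℝ≥0∞)
    (h1 : ∫⁻ x, π1 x ∂ν = 1) (h2 : ∫⁻ x, π2 x ∂ν = 1)
    (μ1 μ2 : Measure W) (hμ1 : μ1 = ν.withDensity π1) (hμ2 : μ2 = ν.withDensity π2)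
    (Λ : ℝ) (hΛ : Λ = (∫⁻ x, min (π1 x) (π2 x) ∂ν).toReal) (hΛpos : 0 < Λ)
    (f : W → ℝ) (hf1 : MemLp f 2 μ1) (hf2 : MemLp f 2 μ2) :
    ∫ x, ∫ y, (f x - f y) ^ 2 ∂μ2 ∂μ1 ≤
      (2 - Λ) / Λ *
        ((∫ x, f x ^ 2 ∂μ1 - (∫ x, f x ∂μ1) ^ 2) +
          (∫ y, f y ^ 2 ∂μ2 - (∫ y, f y ∂μ2) ^ 2)) := by
  have : IsProbabilityMeasure μ1 := ⟨by rw [hμ1, withDensity_apply _ .univ, setLIntegral_univ, h1]⟩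
  have : IsProbabilityMeasure μ2 := ⟨by rw [hμ2, withDensity_apply _ .univ, setLIntegral_univ, h2]⟩
  set ρ := ν.withDensity fun x => min (π1 x) (π2 x)
  have hρΛ : ρ.real Set.univ = Λ := by
    rw [measureReal_def, withDensity_apply _ .univ, setLIntegral_univ, hΛ]
  have hρ1 : ρ ≤ μ1 := hμ1 ▸ withDensity_mono (.of_forall fun x => min_le_left _ _)
  have hρ2 : ρ ≤ μ2 := hμ2 ▸ withDensity_mono (.of_forall fun x => min_le_right _ _)
  have hkey1 := measureReal_univ_mul_sq_integral_sub_average_le hρ1 hf1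
  have hkey2 := measureReal_univ_mul_sq_integral_sub_average_le hρ2 hf2
  rw [hρΛ] at hkey1 hkey2
  have hV1 : Var[f; μ1] = ∫ x, f x ^ 2 ∂μ1 - (∫ x, f x ∂μ1) ^ 2 := variance_eq_sub hf1
  have hV2 : Var[f; μ2] = ∫ y, f y ^ 2 ∂μ2 - (∫ y, f y ∂μ2) ^ 2 := variance_eq_sub hf2
  rw [integral_integral_sub_sq hf1 hf2, ← hV1, ← hV2, div_mul_eq_mul_div, le_div_iff₀ hΛpos]
  -- `(E₁ - E₂)² = 2 (E₁ - c)² + 2 (E₂ - c)² - (E₁ + E₂ - 2c)²`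
  nlinarith [sq_nonneg (∫ x, f x ∂μ1 + ∫ x, f x ∂μ2 - 2 * ⨍ x, f x ∂ρ)]

/-- for two probability densities with positive overlap `Λ`,
`∬ (f(x) − f(y))² μ_1(dx) μ_2(dy) ≤ ((2 − Λ)/Λ)(Var_{μ_1}(f) + Var_{μ_2}(f))`. -/
theorem overlap_variance_bound
    {W : Type*} [MeasurableSpace W]
    (ν : Measure W) [SigmaFinite ν]
    (π1 π2 : W → ℝ≥0∞) (h1m : Measurable π1) (h2m : Measurable π2)
    (h1fin : ∀ x, π1 x ≠ ∞) (h2fin : ∀ x, π2 x ≠ ∞)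
    (h1 : ∫⁻ x, π1 x ∂ν = 1) (h2 : ∫⁻ x, π2 x ∂ν = 1)
    (μ1 μ2 : Measure W) (hμ1 : μ1 = ν.withDensity π1) (hμ2 : μ2 = ν.withDensity π2)
    (Λ : ℝ) (hΛ : Λ = (∫⁻ x, min (π1 x) (π2 x) ∂ν).toReal) (hΛpos : 0 < Λ)
    (f : W → ℝ) (hf1 : MemLp f 2 μ1) (hf2 : MemLp f 2 μ2) :
    ∫ x, ∫ y, (f x - f y) ^ 2 ∂μ2 ∂μ1 ≤
      (2 - Λ) / Λ *
        ((∫ x, f x ^ 2 ∂μ1 - (∫ x, f x ∂μ1) ^ 2) +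
          (∫ y, f y ^ 2 ∂μ2 - (∫ y, f y ∂μ2) ^ 2)) :=
  overlap_variance_bound_general ν π1 π2 h1 h2 μ1 μ2 hμ1 hμ2 Λ hΛ hΛpos f hf1 hf2
end
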